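/- Let j : ℝᴺ → [0,∞] be measurable, even, with 0 < ∫ min{1,|z|²} j(z) dz < ∞. For a > 0 set Ω_a = (−a,a) × ℝ^{N−1} and C̃_a := ∫_{ℝᴺ∖Ω_{2a}} j(z) dz. Then ℰ_j(u,u) ≥ C̃_a ∫_{Ω_a} u² dx for every u ∈ 𝒟ʲ(Ω_a), and C̃_a → ∫_{ℝᴺ} j(z) dz as a → 0⁺. -/

import Mathlib

open MeasureTheory ENNReal Filter Topology

noncomputable section

/-- N-dimensional Euclidean space. -/
abbrev Euc (N : ℕ) := EuclideanSpace ℝ (Fin N)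

/-- The nonlocal quadratic form ℰ_j(u,u) = (1/2)∬ (u(x)-u(y))² j(x-y) dx dy. -/
def Ej {N : ℕ} (j : Euc N → ℝ≥0∞) (u : Euc N → ℝ) : ℝ≥0∞ :=
  (1/2 : ℝ≥0∞) * ∫⁻ p : Euc N × Euc N,
    ENNReal.ofReal ((u p.1 - u p.2)^2) * j (p.1 - p.2) ∂(volume.prod volume)

/-- The squared L² norm of u. -/
def l2sq {N : ℕ} (u : Euc N → ℝ) : ℝ≥0∞ := ∫⁻ x, ENNReal.ofReal ((u x)^2)

/-- The squared norm of 𝒟ʲ(ℝᴺ): ‖u‖² = ℰ_j(u,u) + ‖u‖²_{L²}. -/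
def DnormSq {N : ℕ} (j : Euc N → ℝ≥0∞) (u : Euc N → ℝ) : ℝ≥0∞ := Ej j u + l2sq u

/-- Membership in 𝒟ʲ(ℝᴺ) = {u ∈ L² : ℰ_j(u,u) < ∞}. -/
def MemDj {N : ℕ} (j : Euc N → ℝ≥0∞) (u : Euc N → ℝ) : Prop :=
  MemLp u 2 (volume : Measure (Euc N)) ∧ Ej j u < ⊤

/-- Condition (A1): 0 < ∫ min{1,|z|²} j(z) dz < ∞ (evenness stated separately). -/
def CondA1 {N : ℕ} (j : Euc N → ℝ≥0∞) : Prop :=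
  0 < ∫⁻ z, ENNReal.ofReal (min 1 (‖z‖^2)) * j z ∧
    (∫⁻ z, ENNReal.ofReal (min 1 (‖z‖^2)) * j z) < ⊤

/-- The slab (−a,a) × ℝ^{N−1}. -/
def slab {N : ℕ} (hN : 0 < N) (a : ℝ) : Set (Euc N) :=
  {x : Euc N | x ⟨0, hN⟩ ∈ Set.Ioo (-a) a}

/-- C̃_a := ∫_{ℝᴺ∖Ω_{2a}} j(z) dz. -/
def Ctilde {N : ℕ} (hN : 0 < N) (j : Euc N → ℝ≥0∞) (a : ℝ) : ℝ≥0∞ :=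
  ∫⁻ z in (slab hN (2*a))ᶜ, j z

/-! For `u` vanishing off `Ω`, the energy integrand on `Ω × Ωᶜ` is `u(x)² j(x - y)`; since `j` is
even, this region and its mirror image `Ωᶜ × Ω` carry the same mass, so
`ℰ_j(u,u) ≥ ∫_Ω u(x)² ∫_{Ωᶜ} j(x - y) dy dx`. For the slab `Ω_a`, points `x, y ∈ Ω_a` have
`x - y ∈ Ω_{2a}`, so the inner integral is at least `C̃_a`. As `a ↓ 0` the sets `ℝᴺ ∖ Ω_{2a}`
increase to the complement of the Lebesgue-null hyperplane `{x₁ = 0}`, whence `C̃_a → ∫ j`. -/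

open Set

section SymmetricKernel

variable {α : Type*} [MeasurableSpace α] {μ : Measure α} [SFinite μ]

theorem setLIntegral_prod_compl_comm {G : α × α → ℝ≥0∞} (hG : ∀ p, G p.swap = G p)
    (s : Set α) :
    ∫⁻ p in sᶜ ×ˢ s, G p ∂μ.prod μ = ∫⁻ p in s ×ˢ sᶜ, G p ∂μ.prod μ := by
  have h := (Measure.measurePreserving_swap (μ := μ) (ν := μ)).setLIntegral_comp_preimage_emb
    MeasurableEquiv.prodComm.measurableEmbedding G (sᶜ ×ˢ s)
  rw [preimage_swap_prod] at h
  simp only [hG] at h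
  exact h.symm

theorem two_mul_setLIntegral_prod_compl_le {G : α × α → ℝ≥0∞} (hG : ∀ p, G p.swap = G p)
    {s : Set α} (hs : MeasurableSet s) :
    2 * ∫⁻ p in s ×ˢ sᶜ, G p ∂μ.prod μ ≤ ∫⁻ p, G p ∂μ.prod μ :=
  calc 2 * ∫⁻ p in s ×ˢ sᶜ, G p ∂μ.prod μ
      = ∫⁻ p in s ×ˢ sᶜ ∪ sᶜ ×ˢ s, G p ∂μ.prod μ := by
        rw [lintegral_union (hs.compl.prod hs) (disjoint_left.2 fun _ h₁ h₂ => h₂.1 h₁.1),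
          setLIntegral_prod_compl_comm hG, two_mul]
    _ ≤ ∫⁻ p, G p ∂μ.prod μ := setLIntegral_le_lintegral _ _

end SymmetricKernel

section NonlocalForm

variable {N : ℕ} {j : Euc N → ℝ≥0∞} {u v : Euc N → ℝ} {Ω : Set (Euc N)}

theorem l2sq_congr_ae (h : u =ᵐ[volume] v) : l2sq u = l2sq v :=
  lintegral_congr_ae (h.mono fun x hx => by simp only [hx])

theorem Ej_congr_ae (h : u =ᵐ[volume] v) : Ej j u = Ej j v := by
  have h₁ : ∀ᵐ p ∂(volume.prod volume : Measure (Euc N × Euc N)), u p.1 = v p.1 :=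
    Measure.quasiMeasurePreserving_fst.ae h
  have h₂ : ∀ᵐ p ∂(volume.prod volume : Measure (Euc N × Euc N)), u p.2 = v p.2 :=
    Measure.quasiMeasurePreserving_snd.ae h
  rw [Ej, Ej, lintegral_congr_ae (h₁.and h₂ |>.mono fun p hp => by rw [hp.1, hp.2])]

theorem l2sq_eq_setLIntegral (hΩ : MeasurableSet Ω) (hu : ∀ᵐ x, x ∉ Ω → u x = 0) :
    l2sq u = ∫⁻ x in Ω, ENNReal.ofReal (u x ^ 2) := by
  have hcompl : ∫⁻ x in Ωᶜ, ENNReal.ofReal (u x ^ 2) = 0 :=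
    (lintegral_congr_ae ((ae_restrict_iff' hΩ.compl).2 (hu.mono fun x hx hxΩ => by
      simp [hx hxΩ]))).trans lintegral_zero
  rw [l2sq, ← lintegral_add_compl _ hΩ, hcompl, add_zero]

theorem setLIntegral_compl_energy_eq (hΩ : MeasurableSet Ω) (hu : ∀ᵐ x, x ∉ Ω → u x = 0)
    (x : Euc N) :
    ∫⁻ y in Ωᶜ, ENNReal.ofReal ((u x - u y) ^ 2) * j (x - y)
      = ENNReal.ofReal (u x ^ 2) * ∫⁻ y in Ωᶜ, j (x - y) := by
  rw [← lintegral_const_mul' _ _ ENNReal.ofReal_ne_top]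
  refine setLIntegral_congr_fun_ae hΩ.compl (hu.mono fun y hy hyΩ => ?_)
  rw [hy hyΩ, sub_zero]

theorem mul_l2sq_le_Ej (hj : Measurable j) (heven : ∀ z, j (-z) = j z) (hu : Measurable u)
    (hΩ : MeasurableSet Ω) (hu0 : ∀ᵐ x, x ∉ Ω → u x = 0) {c : ℝ≥0∞}
    (hc : ∀ x ∈ Ω, c ≤ ∫⁻ y in Ωᶜ, j (x - y)) :
    c * l2sq u ≤ Ej j u := by
  set G : Euc N × Euc N → ℝ≥0∞ := fun p => ENNReal.ofReal ((u p.1 - u p.2) ^ 2) * j (p.1 - p.2)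
  have hG : Measurable G := by fun_prop
  have hGswap : ∀ p, G p.swap = G p := fun p => by
    simp only [G, Prod.fst_swap, Prod.snd_swap]
    rw [← neg_sub p.1 p.2, heven, ← neg_sub (u p.1), neg_sq]
  calc c * l2sq u = ∫⁻ x in Ω, c * ENNReal.ofReal (u x ^ 2) := by
        rw [l2sq_eq_setLIntegral hΩ hu0, lintegral_const_mul _ (by fun_prop)]
    _ ≤ ∫⁻ x in Ω, ∫⁻ y in Ωᶜ, G (x, y) := by
        refine setLIntegral_mono (by fun_prop) fun x hx => ?_
        rw [setLIntegral_compl_energy_eq hΩ hu0, mul_comm]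
        gcongr
        exact hc x hx
    _ = ∫⁻ p in Ω ×ˢ Ωᶜ, G p ∂volume.prod volume := by
        rw [← Measure.prod_restrict, lintegral_prod _ hG.aemeasurable]
    _ = 1 / 2 * (2 * ∫⁻ p in Ω ×ˢ Ωᶜ, G p ∂volume.prod volume) := by
        rw [← mul_assoc, one_div, ENNReal.inv_mul_cancel two_ne_zero ofNat_ne_top, one_mul]
    _ ≤ Ej j u := by
        rw [Ej]; gcongr; exact two_mul_setLIntegral_prod_compl_le hGswap hΩ

end NonlocalForm

section Slab

variable {N : ℕ} (hN : 0 < N)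

theorem measurableSet_slab (a : ℝ) : MeasurableSet (slab hN a) :=
  measurableSet_Ioo.preimage (EuclideanSpace.proj (𝕜 := ℝ) _).continuous.measurable

theorem sub_mem_slab_two_mul {a : ℝ} {x y : Euc N} (hx : x ∈ slab hN a) (hy : y ∈ slab hN a) :
    x - y ∈ slab hN (2 * a) := by
  obtain ⟨hx₁, hx₂⟩ := hx
  obtain ⟨hy₁, hy₂⟩ := hy
  constructor <;> simp only [PiLp.sub_apply] <;> linarith

theorem Ctilde_le_setLIntegral_compl_slab (j : Euc N → ℝ≥0∞) {a : ℝ} {x : Euc N}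
    (hx : x ∈ slab hN a) :
    Ctilde hN j a ≤ ∫⁻ y in (slab hN a)ᶜ, j (x - y) := by
  rw [Ctilde, ← (Measure.measurePreserving_sub_left volume x).setLIntegral_comp_preimage_emb
    (MeasurableEquiv.subLeft x).measurableEmbedding]
  exact lintegral_mono_set fun y hy hyΩ => hy (sub_mem_slab_two_mul hN hx hyΩ)

theorem EuclideanSpace.volume_coord_eq_zero {ι : Type*} [Fintype ι] (i : ι) :
    volume {x : EuclideanSpace ℝ ι | x i = 0} = 0 :=
  ((PiLp.volume_preserving_ofLp ι).measure_preimage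
    (measurableSet_eq_fun (measurable_pi_apply i) measurable_const).nullMeasurableSet).trans
    (Measure.pi_hyperplane _ i 0)

theorem compl_slab_two_mul {a : ℝ} (ha : 0 < a) :
    (slab hN (2 * a))ᶜ = {x | 2 ≤ a⁻¹ * |x ⟨0, hN⟩|} := by
  ext x
  simp only [slab, mem_compl_iff, mem_Ioo, mem_ofPred_eq, ← abs_lt, not_lt]
  rw [inv_mul_eq_div, le_div_iff₀ ha]

theorem tendsto_Ctilde (j : Euc N → ℝ≥0∞) :
    Tendsto (Ctilde hN j) (𝓝[>] 0) (𝓝 (∫⁻ z, j z)) := by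
  set ν := volume.withDensity j
  -- with `r = a⁻¹`, the limit `a → 0⁺` becomes a monotone union over `r → ∞`
  set S : ℝ → Set (Euc N) := fun r => {x | 2 ≤ r * |x ⟨0, hN⟩|}
  have hS : Monotone S := fun r s hrs x hx =>
    hx.trans (mul_le_mul_of_nonneg_right hrs (abs_nonneg _))
  have hUnion : ⋃ r, S r = {x | x ⟨0, hN⟩ = 0}ᶜ := by
    ext x
    simp only [S, mem_iUnion, mem_compl_iff, mem_ofPred_eq]
    refine ⟨fun ⟨r, hr⟩ hx => ?_, fun hx => ⟨2 / |x ⟨0, hN⟩|, ?_⟩⟩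
    · rw [hx, abs_zero, mul_zero] at hr
      norm_num at hr
    · rw [div_mul_cancel₀ _ (abs_ne_zero.2 hx)]
  have hnull : ν {x | x ⟨0, hN⟩ = 0} = 0 :=
    withDensity_absolutelyContinuous _ _ (EuclideanSpace.volume_coord_eq_zero _)
  have hν : ν (⋃ r, S r) = ∫⁻ z, j z := by
    rw [hUnion, measure_congr (ae_eq_univ.2 (by rwa [compl_compl])),
      withDensity_apply _ MeasurableSet.univ, Measure.restrict_univ]
  have hCt : ∀ᶠ a in 𝓝[>] 0, ν (S a⁻¹) = Ctilde hN j a :=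
    eventually_mem_nhdsWithin.mono fun a ha => by
      rw [Ctilde, ← withDensity_apply j (measurableSet_slab hN (2 * a)).compl,
        compl_slab_two_mul hN ha]
  rw [← hν]
  exact ((tendsto_measure_iUnion_atTop hS).comp tendsto_inv_nhdsGT_zero).congr' hCt

end Slab

theorem poincare_slab_explicit_general {N : ℕ} (hN : 0 < N) (j : Euc N → ℝ≥0∞) (hj : Measurable j)
    (heven : ∀ z, j (-z) = j z) :
    (∀ a : ℝ, 0 < a → ∀ u : Euc N → ℝ, MemLp u 2 (volume : Measure (Euc N)) →
      Ej j u < ⊤ → (∀ᵐ x : Euc N, x ∉ slab hN a → u x = 0) →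
      Ctilde hN j a * l2sq u ≤ Ej j u) ∧
    Tendsto (fun a : ℝ => Ctilde hN j a) (𝓝[>] 0) (𝓝 (∫⁻ z, j z)) := by
  refine ⟨fun a _ u hu _ hu0 => ?_, tendsto_Ctilde hN j⟩
  obtain ⟨v, hv, huv⟩ := hu.aestronglyMeasurable.aemeasurable
  have hv0 : ∀ᵐ x, x ∉ slab hN a → v x = 0 := by
    filter_upwards [hu0, huv] with x hx hxv hxΩ
    rw [← hxv, hx hxΩ]
  rw [l2sq_congr_ae huv, Ej_congr_ae huv]
  exact mul_l2sq_le_Ej hj heven hv (measurableSet_slab hN a) hv0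
    fun x hx => Ctilde_le_setLIntegral_compl_slab hN j hx

/-- ℰ_j(u,u) ≥ C̃_a ∫_{Ω_a} u² for u ∈ 𝒟ʲ(Ω_a), and C̃_a → ∫ j as a → 0⁺. -/
theorem poincare_slab_explicit {N : ℕ} (hN : 0 < N) (j : Euc N → ℝ≥0∞) (hj : Measurable j)
    (heven : ∀ z, j (-z) = j z) (hA1 : CondA1 j) :
    (∀ a : ℝ, 0 < a → ∀ u : Euc N → ℝ, MemLp u 2 (volume : Measure (Euc N)) →
      Ej j u < ⊤ → (∀ᵐ x : Euc N, x ∉ slab hN a → u x = 0) →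
      Ctilde hN j a * l2sq u ≤ Ej j u) ∧
    Tendsto (fun a : ℝ => Ctilde hN j a) (𝓝[>] 0) (𝓝 (∫⁻ z, j z)) :=
  poincare_slab_explicit_general hN j hj heven
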